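/- Let P be a root pairing (RootPairing ι K M N) over a field K with ι finite, and let φ ∈ N satisfy ⟨αᵢ, φ⟩ ≠ 0 for every root αᵢ. Define c : N × N × N → K by c(β, γ, δ) = ∑_{i ∈ ι} ⟨αᵢ, β⟩·⟨αᵢ, γ⟩·⟨αᵢ, δ⟩ / ⟨αᵢ, φ⟩. Then c is symmetric in its three arguments and linear in each, and c is invariant under the simultaneous Weyl-group action: for every index j, applying the coreflection in the j-th root simultaneously to β, γ, δ, and φ leaves the value of c unchanged. -/

import Mathlib

/-!
Each summand is a product of linear forms in `β`, `γ`, `δ`, which gives symmetry and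
linearity. Since `⟨αᵢ, s_j x⟩ = ⟨s_j αᵢ, x⟩` and `s_j` permutes the roots, applying
the coreflection `s_j` to all four arguments only reindexes the sum.
-/

open Finset

namespace RootPairing

lemma root'_coreflection {ι R M N : Type*} [CommRing R] [AddCommGroup M] [Module R M]
    [AddCommGroup N] [Module R N] (P : RootPairing ι R M N) (i j : ι) (x : N) :
    P.root' i (P.coreflection j x) = P.root' (P.reflectionPerm j i) x := by
  rw [P.coreflection_eq_flip_reflection]
  exact P.flip.coroot'_reflection x

variable {ι K M N : Type*} [Field K] [AddCommGroup M] [Module K M] [AddCommGroup N]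
  [Module K N] [Fintype ι] (P : RootPairing ι K M N)

def cubicIntegrand (ψ β γ δ : N) : K :=
  ∑ i, P.root' i β * P.root' i γ * P.root' i δ / P.root' i ψ

lemma cubicIntegrand_swap_left (ψ β γ δ : N) :
    P.cubicIntegrand ψ β γ δ = P.cubicIntegrand ψ γ β δ :=
  sum_congr rfl fun _ _ => by ring

lemma cubicIntegrand_swap_right (ψ β γ δ : N) :
    P.cubicIntegrand ψ β γ δ = P.cubicIntegrand ψ β δ γ :=
  sum_congr rfl fun _ _ => by ring

lemma cubicIntegrand_smul_add_left (ψ : N) (a : K) (β β' γ δ : N) :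
    P.cubicIntegrand ψ (a • β + β') γ δ =
      a * P.cubicIntegrand ψ β γ δ + P.cubicIntegrand ψ β' γ δ := by
  rw [cubicIntegrand, cubicIntegrand, cubicIntegrand, mul_sum, ← sum_add_distrib]
  refine sum_congr rfl fun i _ => ?_
  rw [map_add, map_smul, smul_eq_mul]
  ring

lemma cubicIntegrand_smul_add_mid (ψ : N) (a : K) (β γ γ' δ : N) :
    P.cubicIntegrand ψ β (a • γ + γ') δ =
      a * P.cubicIntegrand ψ β γ δ + P.cubicIntegrand ψ β γ' δ := by
  rw [P.cubicIntegrand_swap_left ψ β, cubicIntegrand_smul_add_left,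
    P.cubicIntegrand_swap_left ψ γ, P.cubicIntegrand_swap_left ψ γ']

lemma cubicIntegrand_smul_add_right (ψ : N) (a : K) (β γ δ δ' : N) :
    P.cubicIntegrand ψ β γ (a • δ + δ') =
      a * P.cubicIntegrand ψ β γ δ + P.cubicIntegrand ψ β γ δ' := by
  rw [P.cubicIntegrand_swap_right ψ β, cubicIntegrand_smul_add_mid,
    P.cubicIntegrand_swap_right ψ β δ, P.cubicIntegrand_swap_right ψ β δ']

lemma cubicIntegrand_coreflection (j : ι) (ψ β γ δ : N) :
    P.cubicIntegrand (P.coreflection j ψ) (P.coreflection j β) (P.coreflection j γ)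
      (P.coreflection j δ) = P.cubicIntegrand ψ β γ δ := by
  simp only [cubicIntegrand, root'_coreflection]
  exact (P.reflectionPerm j).sum_comp fun i =>
    P.root' i β * P.root' i γ * P.root' i δ / P.root' i ψ

end RootPairing

theorem cubic_integrand_symm_linear_weyl_invariant_general {ι K M N : Type*} [Field K]
    [AddCommGroup M] [Module K M] [AddCommGroup N] [Module K N] [Fintype ι]
    (P : RootPairing ι K M N) (φ : N) :
    (fun c : N → N → N → N → K =>
      (∀ β γ δ : N, c φ β γ δ = c φ γ β δ) ∧
      (∀ β γ δ : N, c φ β γ δ = c φ β δ γ) ∧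
      (∀ (a : K) (β β' γ δ : N),
        c φ (a • β + β') γ δ = a * c φ β γ δ + c φ β' γ δ) ∧
      (∀ (a : K) (β γ γ' δ : N),
        c φ β (a • γ + γ') δ = a * c φ β γ δ + c φ β γ' δ) ∧
      (∀ (a : K) (β γ δ δ' : N),
        c φ β γ (a • δ + δ') = a * c φ β γ δ + c φ β γ δ') ∧
      (∀ (j : ι) (β γ δ : N),
        c (P.coreflection j φ) (P.coreflection j β) (P.coreflection j γ)
            (P.coreflection j δ) = c φ β γ δ))
      (fun ψ β γ δ : N =>
        ∑ i : ι,
          P.toLinearMap (P.root i) β * P.toLinearMap (P.root i) γ *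
              P.toLinearMap (P.root i) δ / P.toLinearMap (P.root i) ψ) :=
  ⟨P.cubicIntegrand_swap_left φ, P.cubicIntegrand_swap_right φ,
    P.cubicIntegrand_smul_add_left φ, P.cubicIntegrand_smul_add_mid φ,
    P.cubicIntegrand_smul_add_right φ, fun j => P.cubicIntegrand_coreflection j φ⟩

/-- The integrand of the symmetric formula for the Donagi–Markman cubic of the Hitchin
system, `c(β,γ,δ) = ∑ᵢ ⟨αᵢ,β⟩⟨αᵢ,γ⟩⟨αᵢ,δ⟩ / ⟨αᵢ,φ⟩`, is symmetric in its three
arguments, linear in each, and invariant under the simultaneous Weyl-group action on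
`β`, `γ`, `δ` and `φ`. -/
theorem cubic_integrand_symm_linear_weyl_invariant {ι K M N : Type*} [Field K]
    [AddCommGroup M] [Module K M] [AddCommGroup N] [Module K N] [Fintype ι]
    (P : RootPairing ι K M N) (φ : N)
    (hφ : ∀ i : ι, P.toLinearMap (P.root i) φ ≠ 0) :
    (fun c : N → N → N → N → K =>
      (∀ β γ δ : N, c φ β γ δ = c φ γ β δ) ∧
      (∀ β γ δ : N, c φ β γ δ = c φ β δ γ) ∧
      (∀ (a : K) (β β' γ δ : N),
        c φ (a • β + β') γ δ = a * c φ β γ δ + c φ β' γ δ) ∧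
      (∀ (a : K) (β γ γ' δ : N),
        c φ β (a • γ + γ') δ = a * c φ β γ δ + c φ β γ' δ) ∧
      (∀ (a : K) (β γ δ δ' : N),
        c φ β γ (a • δ + δ') = a * c φ β γ δ + c φ β γ δ') ∧
      (∀ (j : ι) (β γ δ : N),
        c (P.coreflection j φ) (P.coreflection j β) (P.coreflection j γ)
            (P.coreflection j δ) = c φ β γ δ))
      (fun ψ β γ δ : N =>
        ∑ i : ι,
          P.toLinearMap (P.root i) β * P.toLinearMap (P.root i) γ *
              P.toLinearMap (P.root i) δ / P.toLinearMap (P.root i) ψ) :=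
  cubic_integrand_symm_linear_weyl_invariant_general P φ
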